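/- arXiv:2411.06354 — 2 statements merged into one kernel-verified Lean document; each statement's English description precedes it below -/
import Mathlib

section
/- Let Q > 10 and define the Joseph–Lundgren exponent p_JL(Q) = ((Q-2)² - 4Q + 8√(Q-1)) / ((Q-2)(Q-10)). Then for every p with 1 < p < p_JL(Q), there exists s ∈ [1, s(p)) with s(p) = 2p + 2√(p(p-1)) - 1 such that Q - 2(s+p)/(p-1) < 0. -/
theorem exists_good_exponent_below_JL (Q : ℝ) (hQ : 10 < Q) (p : ℝ) (hp : 1 < p)
    (hpJL : p < ((Q-2)^2 - 4*Q + 8*Real.sqrt (Q-1)) / ((Q-2)*(Q-10))) :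
    ∃ s : ℝ, 1 ≤ s ∧ s < 2*p + 2*Real.sqrt (p*(p-1)) - 1 ∧
      Q - 2*(s+p)/(p-1) < 0 := by
  set r := Real.sqrt (Q-1) with hrdef
  set w := Real.sqrt (p*(p-1)) with hwdef
  have hr0 : 0 ≤ r := Real.sqrt_nonneg _
  have hw0 : 0 ≤ w := Real.sqrt_nonneg _
  have hr2 : r^2 = Q - 1 := Real.sq_sqrt (by linarith)
  have hw2 : w^2 = p*(p-1) := Real.sq_sqrt (by nlinarith)
  have hc : (0:ℝ) < (Q-2)*(Q-10) := by nlinarith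
  have hcp : (Q-2)*(Q-10)*p < Q^2 - 8*Q + 4 + 8*r := by
    nlinarith [(lt_div_iff₀ hc).mp hpJL]
  -- key inequality
  have key : Q*(p-1) - 6*p + 2 < 4*w := by
    rcases lt_or_ge ((Q-6)*p - (Q-2)) 0 with hA | hA
    · nlinarith
    · -- (Q-6) r > Q+2
      have hr3 : (Q-6)*r > Q+2 := by nlinarith [sq_nonneg (r - 3)]
      -- lower bound on c*p
      have hcpL : (Q-2)*(Q-10)*p > Q^2 - 8*Q + 4 - 8*r := by nlinarith
      -- quadratic negative
      have hquad : ((Q-6)*p - (Q-2))^2 < 16*p*(p-1) := by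
        nlinarith [mul_pos (sub_pos.mpr hcp) (sub_pos.mpr hcpL)]
      have : ((Q-6)*p - (Q-2))^2 < (4*w)^2 := by nlinarith
      nlinarith
  have hsp1 : (1:ℝ) < 2*p + 2*w - 1 := by linarith
  have hmid : Q*(p-1)/2 - p < 2*p + 2*w - 1 := by linarith
  refine ⟨max 1 ((Q*(p-1)/2 - p + (2*p + 2*w - 1))/2), le_max_left _ _, ?_, ?_⟩
  · exact max_lt hsp1 (by linarith)
  · have hs : Q*(p-1)/2 - p < max 1 ((Q*(p-1)/2 - p + (2*p + 2*w - 1))/2) := by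
      have := le_max_right 1 ((Q*(p-1)/2 - p + (2*p + 2*w - 1))/2)
      linarith
    have hp1 : (0:ℝ) < p - 1 := by linarith
    have : Q < 2*(max 1 ((Q*(p-1)/2 - p + (2*p + 2*w - 1))/2) + p)/(p-1) := by
      rw [lt_div_iff₀ hp1]; linarith
    linarith
end

section
/- Let f : (0,∞) → ℝ be C². Then the composition f ∘ ρ, with ρ(x,y) = (|x|^{2(α+1)} + |y|²)^{1/(2(α+1))}, satisfies Δ_α(f∘ρ)(x,y) = (|x|^{2α}/ρ^{2α}) ( f''(ρ) + (Q-1)/ρ · f'(ρ) ) at every point with x ≠ 0, where Q = m + n(α+1). -/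
/-! The Grushin Laplacian obeys the chain rule
`Δ_α (g ∘ G) = g''(G) |∇_α G|² + g'(G) Δ_α G`. The gauge is best handled through the smooth
function `G = ρ^{2(α+1)} = |x|^{2(α+1)} + |y|²`, for which `|∇_α G|² = 4(α+1)² |x|^{2α} G` and
`Δ_α G = 2(α+1)(Q + 2α) |x|^{2α}`. The chain rule with `g = t^{1/(2(α+1))}` then gives
`|∇_α ρ|² = |x|^{2α}/ρ^{2α}` and `Δ_α ρ = (Q - 1) |x|^{2α}/ρ^{2α+1}`, and once more with `g = f`
the radial formula. -/

open MeasureTheory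

noncomputable section

/-- ℝ^m × ℝ^n as a product of Euclidean spaces. -/
abbrev GSpace (m n : ℕ) := (EuclideanSpace ℝ (Fin m)) × (EuclideanSpace ℝ (Fin n))

/-- Anisotropic Baouendi–Grushin dilation δ_r(x,y) = (r x, r^{α+1} y). -/
def gDil {m n : ℕ} (α r : ℝ) (z : GSpace m n) : GSpace m n :=
  (r • z.1, (r ^ (α+1) : ℝ) • z.2)

/-- Partial derivative in the i-th x-direction. -/
def pderivX {m n : ℕ} (u : GSpace m n → ℝ) (i : Fin m) (z : GSpace m n) : ℝ :=
  fderiv ℝ u z (EuclideanSpace.single i 1, 0)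

/-- Partial derivative in the j-th y-direction. -/
def pderivY {m n : ℕ} (u : GSpace m n → ℝ) (j : Fin n) (z : GSpace m n) : ℝ :=
  fderiv ℝ u z (0, EuclideanSpace.single j 1)

/-- Grushin gradient ∇_α u = (∇_x u, (α+1)|x|^α ∇_y u). -/
def gradAlpha {m n : ℕ} (α : ℝ) (u : GSpace m n → ℝ) (z : GSpace m n) : GSpace m n :=
  ((WithLp.equiv 2 (Fin m → ℝ)).symm fun i => pderivX u i z,
   (WithLp.equiv 2 (Fin n → ℝ)).symm fun j => (α+1) * ‖z.1‖ ^ α * pderivY u j z)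

/-- Baouendi–Grushin operator Δ_α u = Δ_x u + (α+1)²|x|^{2α} Δ_y u. -/
def laplacianAlpha {m n : ℕ} (α : ℝ) (u : GSpace m n → ℝ) (z : GSpace m n) : ℝ :=
  (∑ i, pderivX (pderivX u i) i z) +
    (α+1)^2 * ‖z.1‖ ^ (2*α) * ∑ j, pderivY (pderivY u j) j z

/-- Generator of dilations Zu = Σ x_i ∂_{x_i} u + (α+1) Σ y_j ∂_{y_j} u,
i.e. the derivative of u at z along the vector (x, (α+1)y). -/
def Zop {m n : ℕ} (α : ℝ) (u : GSpace m n → ℝ) (z : GSpace m n) : ℝ :=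
  fderiv ℝ u z (z.1, (α+1) • z.2)

/-- Grushin gauge ρ(x,y) = (|x|^{2(α+1)} + |y|²)^{1/(2(α+1))}. -/
def gGauge {m n : ℕ} (α : ℝ) (z : GSpace m n) : ℝ :=
  (‖z.1‖ ^ (2*(α+1)) + ‖z.2‖ ^ 2) ^ (1/(2*(α+1)))

/-- Euclidean squared norm of a vector of GSpace. -/
def gnormSq {m n : ℕ} (v : GSpace m n) : ℝ := ‖v.1‖^2 + ‖v.2‖^2

open Filter Topology

section Calculus

variable {E : Type*} [NormedAddCommGroup E] [NormedSpace ℝ E]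

theorem fderiv_comp_apply_of_hasDerivAt {g : ℝ → ℝ} {g' : ℝ} {G : E → ℝ} {z : E}
    (hg : HasDerivAt g g' (G z)) (hG : DifferentiableAt ℝ G z) (v : E) :
    fderiv ℝ (fun w => g (G w)) z v = g' * fderiv ℝ G z v := by
  have h : HasFDerivAt (fun w => g (G w)) (g' • fderiv ℝ G z) z :=
    hg.comp_hasFDerivAt z hG.hasFDerivAt
  rw [h.fderiv]
  rfl

theorem fderiv_fderiv_comp_apply {g g' : ℝ → ℝ} {g'' : ℝ} {G : E → ℝ} {z : E}
    (hg : ∀ᶠ t in 𝓝 (G z), HasDerivAt g (g' t) t) (hg' : HasDerivAt g' g'' (G z))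
    (hG : ContDiffAt ℝ 2 G z) (v : E) :
    fderiv ℝ (fun w => fderiv ℝ (fun w => g (G w)) w v) z v =
      g'' * fderiv ℝ G z v ^ 2 + g' (G z) * fderiv ℝ (fun w => fderiv ℝ G w v) z v := by
  have hG_near : ∀ᶠ w in 𝓝 z, DifferentiableAt ℝ G w :=
    (hG.eventually (by simp)).mono fun w hw => hw.differentiableAt (by norm_num)
  have hg_near : ∀ᶠ w in 𝓝 z, HasDerivAt g (g' (G w)) (G w) :=
    hG.continuousAt.eventually hg
  have hfirst : (fun w => fderiv ℝ (fun w => g (G w)) w v)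
      =ᶠ[𝓝 z] fun w => g' (G w) * fderiv ℝ G w v := by
    filter_upwards [hG_near, hg_near] with w hGw hgw
    exact fderiv_comp_apply_of_hasDerivAt hgw hGw v
  have hDG : DifferentiableAt ℝ (fun w => fderiv ℝ G w v) z :=
    ((hG.fderiv_right (m := 1) (by norm_num)).differentiableAt (by norm_num)).clm_apply
      (differentiableAt_const v)
  have hg'G : HasFDerivAt (fun w => g' (G w)) (g'' • fderiv ℝ G z) z :=
    hg'.comp_hasFDerivAt z (hG.differentiableAt (by norm_num)).hasFDerivAt
  rw [hfirst.fderiv_eq, fderiv_fun_mul hg'G.differentiableAt hDG, hg'G.fderiv]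
  simp only [add_apply, smul_apply, smul_eq_mul]
  ring

theorem hasFDerivAt_norm_rpow_of_ne_zero {F : Type*} [NormedAddCommGroup F]
    [InnerProductSpace ℝ F] {x : F} (hx : x ≠ 0) (p : ℝ) :
    HasFDerivAt (fun x : F => ‖x‖ ^ p) ((p * ‖x‖ ^ (p - 2)) • innerSL ℝ x) x := by
  have hsq_rpow (y : F) (q : ℝ) : (‖y‖ ^ 2) ^ q = ‖y‖ ^ (2 * q) := by
    rw [← Real.rpow_natCast, ← Real.rpow_mul (norm_nonneg y), Nat.cast_ofNat]
  have h := (hasStrictFDerivAt_norm_sq x).hasFDerivAt.rpow_const (p := p / 2)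
    (Or.inl (by simpa using hx))
  simp only [hsq_rpow, mul_div_cancel₀ p two_ne_zero] at h
  refine h.congr_fderiv ?_
  rw [← Nat.cast_smul_eq_nsmul ℝ, smul_smul]
  congr 1
  ring_nf

theorem DifferentiableOn.hasDerivAt_derivWithin {f : ℝ → ℝ} {s : Set ℝ}
    (hf : DifferentiableOn ℝ f s) (hs : IsOpen s) {t : ℝ} (ht : t ∈ s) :
    HasDerivAt f (derivWithin f s t) t := by
  rw [derivWithin_of_isOpen hs ht]
  exact ((hf t ht).differentiableAt (hs.mem_nhds ht)).hasDerivAt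

end Calculus

section GrushinChainRule

variable {m n : ℕ} {α : ℝ} {g g' : ℝ → ℝ} {g'' : ℝ} {G : GSpace m n → ℝ} {z : GSpace m n}

theorem gnormSq_smul (c : ℝ) (v : GSpace m n) : gnormSq (c • v) = c ^ 2 * gnormSq v := by
  simp only [gnormSq, Prod.smul_fst, Prod.smul_snd, norm_smul, mul_pow, Real.norm_eq_abs,
    sq_abs]
  ring

theorem gnormSq_gradAlpha (u : GSpace m n → ℝ) (z : GSpace m n) :
    gnormSq (gradAlpha α u z) =
      ∑ i, pderivX u i z ^ 2 + (α + 1) ^ 2 * ‖z.1‖ ^ (2 * α) * ∑ j, pderivY u j z ^ 2 := by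
  have hx : (‖z.1‖ ^ α) ^ 2 = ‖z.1‖ ^ (2 * α) := by
    rw [← Real.rpow_natCast, ← Real.rpow_mul (norm_nonneg _)]
    ring_nf
  simp only [gnormSq, gradAlpha, EuclideanSpace.norm_sq_eq, Real.norm_eq_abs, sq_abs,
    WithLp.equiv_symm_apply, mul_pow, hx, Finset.mul_sum]

theorem gradAlpha_comp {c : ℝ} (hg : HasDerivAt g c (G z)) (hG : DifferentiableAt ℝ G z) :
    gradAlpha α (fun w => g (G w)) z = c • gradAlpha α G z := by
  simp only [gradAlpha, pderivX, pderivY, fderiv_comp_apply_of_hasDerivAt hg hG]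
  ext <;> simp [mul_left_comm]

theorem pderivX_pderivX_comp (hg : ∀ᶠ t in 𝓝 (G z), HasDerivAt g (g' t) t)
    (hg' : HasDerivAt g' g'' (G z)) (hG : ContDiffAt ℝ 2 G z) (i : Fin m) :
    pderivX (pderivX (fun w => g (G w)) i) i z =
      g'' * pderivX G i z ^ 2 + g' (G z) * pderivX (pderivX G i) i z :=
  fderiv_fderiv_comp_apply hg hg' hG _

theorem pderivY_pderivY_comp (hg : ∀ᶠ t in 𝓝 (G z), HasDerivAt g (g' t) t)
    (hg' : HasDerivAt g' g'' (G z)) (hG : ContDiffAt ℝ 2 G z) (j : Fin n) :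
    pderivY (pderivY (fun w => g (G w)) j) j z =
      g'' * pderivY G j z ^ 2 + g' (G z) * pderivY (pderivY G j) j z :=
  fderiv_fderiv_comp_apply hg hg' hG _

theorem laplacianAlpha_comp (hg : ∀ᶠ t in 𝓝 (G z), HasDerivAt g (g' t) t)
    (hg' : HasDerivAt g' g'' (G z)) (hG : ContDiffAt ℝ 2 G z) :
    laplacianAlpha α (fun w => g (G w)) z =
      g'' * gnormSq (gradAlpha α G z) + g' (G z) * laplacianAlpha α G z := by
  simp only [laplacianAlpha, pderivX_pderivX_comp hg hg' hG, pderivY_pderivY_comp hg hg' hG,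
    gnormSq_gradAlpha, Finset.sum_add_distrib, ← Finset.mul_sum]
  ring

end GrushinChainRule

def gGaugePow {m n : ℕ} (α : ℝ) (w : GSpace m n) : ℝ := ‖w.1‖ ^ (2 * (α + 1)) + ‖w.2‖ ^ 2

section GrushinGauge

variable {m n : ℕ} {α : ℝ} {z : GSpace m n}

theorem gGaugePow_pos (hz : z.1 ≠ 0) : 0 < gGaugePow α z := by
  unfold gGaugePow
  have := norm_pos_iff.2 hz
  positivity

theorem contDiffAt_gGaugePow {k : WithTop ℕ∞} (hz : z.1 ≠ 0) :
    ContDiffAt ℝ k (gGaugePow α) z :=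
  (((contDiffAt_norm ℝ hz).comp z contDiffAt_fst).rpow_const_of_ne (norm_ne_zero_iff.2 hz)).add
    ((contDiff_norm_sq ℝ).comp contDiff_snd).contDiffAt

theorem hasFDerivAt_norm_fst_rpow (hz : z.1 ≠ 0) (p : ℝ) :
    HasFDerivAt (fun w : GSpace m n => ‖w.1‖ ^ p)
      ((p * ‖z.1‖ ^ (p - 2)) • (innerSL ℝ z.1).comp (ContinuousLinearMap.fst ℝ _ _)) z :=
  (hasFDerivAt_norm_rpow_of_ne_zero hz p).comp z hasFDerivAt_fst

theorem hasFDerivAt_gGaugePow (hz : z.1 ≠ 0) :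
    HasFDerivAt (gGaugePow α)
      ((2 * (α + 1) * ‖z.1‖ ^ (2 * α)) • (innerSL ℝ z.1).comp (ContinuousLinearMap.fst ℝ _ _) +
        (2 : ℝ) • (innerSL ℝ z.2).comp (ContinuousLinearMap.snd ℝ _ _)) z := by
  have hx := hasFDerivAt_norm_fst_rpow hz (2 * (α + 1))
  have hy := hasFDerivAt_snd (𝕜 := ℝ) (p := z) |>.norm_sq
  rw [show 2 * (α + 1) - 2 = 2 * α by ring] at hx
  refine (hx.add hy).congr_fderiv ?_
  rw [two_nsmul, two_smul]

theorem pderivX_gGaugePow (hz : z.1 ≠ 0) (i : Fin m) :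
    pderivX (gGaugePow α) i z = 2 * (α + 1) * (‖z.1‖ ^ (2 * α) * z.1 i) := by
  simp [pderivX, (hasFDerivAt_gGaugePow hz).fderiv, EuclideanSpace.inner_single_right, mul_assoc]

theorem pderivY_gGaugePow (hz : z.1 ≠ 0) (j : Fin n) :
    pderivY (gGaugePow α) j z = 2 * z.2 j := by
  simp [pderivY, (hasFDerivAt_gGaugePow hz).fderiv, EuclideanSpace.inner_single_right]

theorem pderivX_pderivX_gGaugePow (hz : z.1 ≠ 0) (i : Fin m) :
    pderivX (pderivX (gGaugePow α) i) i z =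
      2 * (α + 1) * (2 * α * ‖z.1‖ ^ (2 * α - 2) * z.1 i ^ 2 + ‖z.1‖ ^ (2 * α)) := by
  have hnear : pderivX (gGaugePow α) i =ᶠ[𝓝 z] fun w => 2 * (α + 1) * (‖w.1‖ ^ (2 * α) * w.1 i) :=
    (continuous_fst.continuousAt.eventually_ne hz).mono
      fun w hw => pderivX_gGaugePow hw i
  have hcoord : HasFDerivAt (fun w : GSpace m n => w.1 i)
      ((EuclideanSpace.proj i).comp (ContinuousLinearMap.fst ℝ _ _)) z :=
    ((EuclideanSpace.proj i).comp (ContinuousLinearMap.fst ℝ (EuclideanSpace ℝ (Fin m))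
      (EuclideanSpace ℝ (Fin n)))).hasFDerivAt
  rw [pderivX, hnear.fderiv_eq,
    (((hasFDerivAt_norm_fst_rpow hz (2 * α)).fun_mul hcoord).const_mul _).fderiv]
  simp [EuclideanSpace.inner_single_right]
  ring

theorem pderivY_pderivY_gGaugePow (hz : z.1 ≠ 0) (j : Fin n) :
    pderivY (pderivY (gGaugePow α) j) j z = 2 := by
  have hnear : pderivY (gGaugePow α) j =ᶠ[𝓝 z] fun w => 2 * w.2 j :=
    (continuous_fst.continuousAt.eventually_ne hz).mono
      fun w hw => pderivY_gGaugePow hw j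
  have hcoord : HasFDerivAt (fun w : GSpace m n => w.2 j)
      ((EuclideanSpace.proj j).comp (ContinuousLinearMap.snd ℝ _ _)) z :=
    ((EuclideanSpace.proj j).comp (ContinuousLinearMap.snd ℝ (EuclideanSpace ℝ (Fin m))
      (EuclideanSpace ℝ (Fin n)))).hasFDerivAt
  rw [pderivY, hnear.fderiv_eq, (hcoord.const_mul 2).fderiv]
  simp

theorem gnormSq_gradAlpha_gGaugePow (hz : z.1 ≠ 0) :
    gnormSq (gradAlpha α (gGaugePow α) z) = 4 * (α + 1) ^ 2 * ‖z.1‖ ^ (2 * α) * gGaugePow α z := by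
  have hx : ‖z.1‖ ^ (2 * (α + 1)) = ‖z.1‖ ^ (2 * α) * ‖z.1‖ ^ 2 := by
    rw [show 2 * (α + 1) = 2 * α + (2 : ℕ) by push_cast; ring,
      Real.rpow_add_natCast (norm_ne_zero_iff.2 hz)]
  simp only [gnormSq_gradAlpha, pderivX_gGaugePow hz, pderivY_gGaugePow hz, mul_pow,
    ← Finset.mul_sum, ← EuclideanSpace.real_norm_sq_eq, gGaugePow, hx]
  ring

theorem laplacianAlpha_gGaugePow (hz : z.1 ≠ 0) :
    laplacianAlpha α (gGaugePow α) z =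
      2 * (α + 1) * ((m + n * (α + 1)) + 2 * α) * ‖z.1‖ ^ (2 * α) := by
  have hx : ‖z.1‖ ^ (2 * α - 2) * ‖z.1‖ ^ 2 = ‖z.1‖ ^ (2 * α) := by
    rw [show 2 * α - 2 = 2 * α - (2 : ℕ) by push_cast; ring,
      Real.rpow_sub_natCast (norm_ne_zero_iff.2 hz), div_mul_cancel₀ _ (by positivity)]
  simp only [laplacianAlpha, pderivX_pderivX_gGaugePow hz, pderivY_pderivY_gGaugePow hz,
    Finset.sum_add_distrib, ← Finset.mul_sum, ← EuclideanSpace.real_norm_sq_eq,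
    Finset.sum_const, Finset.card_univ, Fintype.card_fin, nsmul_eq_mul]
  linear_combination (4 * α * (α + 1)) * hx

theorem gGauge_pos (hz : z.1 ≠ 0) : 0 < gGauge α z :=
  Real.rpow_pos_of_pos (gGaugePow_pos hz) _

theorem contDiffAt_gGauge {k : WithTop ℕ∞} (hz : z.1 ≠ 0) : ContDiffAt ℝ k (gGauge α) z :=
  (contDiffAt_gGaugePow hz).rpow_const_of_ne (gGaugePow_pos hz).ne'

theorem gGauge_rpow_mul_sq (hα : α + 1 ≠ 0) (hz : z.1 ≠ 0) :
    gGauge α z ^ (2 * α) * gGauge α z ^ 2 = gGaugePow α z := by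
  rw [← Real.rpow_add_natCast (gGauge_pos hz).ne']
  change (gGaugePow α z ^ (1 / (2 * (α + 1)))) ^ _ = _
  rw [← Real.rpow_mul (gGaugePow_pos hz).le]
  convert Real.rpow_one (gGaugePow α z)
  field_simp
  push_cast
  ring

theorem gGaugePow_rpow_sub_one (hz : z.1 ≠ 0) :
    gGaugePow α z ^ (1 / (2 * (α + 1)) - 1) = gGauge α z / gGaugePow α z :=
  Real.rpow_sub_one (gGaugePow_pos hz).ne' _

theorem gnormSq_gradAlpha_gGauge (hα : α + 1 ≠ 0) (hz : z.1 ≠ 0) :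
    gnormSq (gradAlpha α (gGauge α) z) = ‖z.1‖ ^ (2 * α) / gGauge α z ^ (2 * α) := by
  set β := 1 / (2 * (α + 1))
  have hG := gGaugePow_pos (α := α) hz
  have hρ := gGauge_pos (α := α) hz
  have hgrad : gradAlpha α (gGauge α) z =
      (β * gGaugePow α z ^ (β - 1)) • gradAlpha α (gGaugePow α) z :=
    gradAlpha_comp (g := fun t => t ^ β) (Real.hasDerivAt_rpow_const (Or.inl hG.ne'))
      ((contDiffAt_gGaugePow hz).differentiableAt one_ne_zero)
  rw [hgrad, gnormSq_smul, gnormSq_gradAlpha_gGaugePow hz, gGaugePow_rpow_sub_one hz,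
    ← gGauge_rpow_mul_sq hα hz]
  simp only [β]
  field_simp
  ring

theorem laplacianAlpha_gGauge (hα : α + 1 ≠ 0) (hz : z.1 ≠ 0) :
    laplacianAlpha α (gGauge α) z =
      (((m : ℝ) + n * (α + 1)) - 1) * ‖z.1‖ ^ (2 * α) / (gGauge α z ^ (2 * α) * gGauge α z) := by
  set β := 1 / (2 * (α + 1))
  have hG := gGaugePow_pos (α := α) hz
  have hρ := gGauge_pos (α := α) hz
  have hlap : laplacianAlpha α (gGauge α) z =
      β * ((β - 1) * gGaugePow α z ^ (β - 1 - 1)) * gnormSq (gradAlpha α (gGaugePow α) z) +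
        β * gGaugePow α z ^ (β - 1) * laplacianAlpha α (gGaugePow α) z :=
    laplacianAlpha_comp (g := fun t => t ^ β) (g' := fun t => β * t ^ (β - 1))
      ((lt_mem_nhds hG).mono fun t ht => Real.hasDerivAt_rpow_const (Or.inl ht.ne'))
      ((Real.hasDerivAt_rpow_const (Or.inl hG.ne')).const_mul β) (contDiffAt_gGaugePow hz)
  rw [hlap, Real.rpow_sub_one hG.ne' (β - 1), gnormSq_gradAlpha_gGaugePow hz,
    laplacianAlpha_gGaugePow hz, gGaugePow_rpow_sub_one hz, ← gGauge_rpow_mul_sq hα hz]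
  simp only [β]
  field_simp
  ring

end GrushinGauge

/-- Radial formula for the Baouendi–Grushin operator:
Δ_α(f∘ρ) = (|x|^{2α}/ρ^{2α}) (f''(ρ) + (Q-1)/ρ · f'(ρ)) for x ≠ 0. -/
theorem laplacianAlpha_radial {m n : ℕ} (α : ℝ) (hα : 0 ≤ α)
    (f : ℝ → ℝ) (hf : ContDiffOn ℝ 2 f (Set.Ioi 0)) :
    ∀ z : GSpace m n, z.1 ≠ 0 →
      laplacianAlpha α (fun w => f (gGauge α w)) z =
        ‖z.1‖ ^ (2*α) / (gGauge α z) ^ (2*α) *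
          (derivWithin (derivWithin f (Set.Ioi 0)) (Set.Ioi 0) (gGauge α z) +
            (((m : ℝ) + n*(α+1)) - 1) / gGauge α z *
              derivWithin f (Set.Ioi 0) (gGauge α z)) := by
  intro z hz
  have hα1 : α + 1 ≠ 0 := by positivity
  have hρ := gGauge_pos (α := α) hz
  have hf' : ContDiffOn ℝ 1 (derivWithin f (Set.Ioi 0)) (Set.Ioi 0) :=
    hf.derivWithin (uniqueDiffOn_Ioi 0) (by norm_num)
  have hf'' : HasDerivAt (derivWithin f (Set.Ioi 0))
      (derivWithin (derivWithin f (Set.Ioi 0)) (Set.Ioi 0) (gGauge α z)) (gGauge α z) :=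
    (hf'.differentiableOn one_ne_zero).hasDerivAt_derivWithin isOpen_Ioi hρ
  rw [laplacianAlpha_comp ((lt_mem_nhds hρ).mono fun t ht =>
      (hf.differentiableOn two_ne_zero).hasDerivAt_derivWithin isOpen_Ioi ht) hf''
      (contDiffAt_gGauge hz), gnormSq_gradAlpha_gGauge hα1 hz, laplacianAlpha_gGauge hα1 hz]
  field_simp

end
end
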